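/- Let φ : I → R be a lower semicontinuous function on an interval I ⊆ R, and let Î be the set of global minimizers of φ over I. Then φ is pseudoconvex with respect to the lower Dini derivative if and only if: (i) either Î = ∅ and φ is strictly monotone on I, or Î is a nonempty interval on which φ is constant, with φ strictly increasing on I₊ = {t ∈ I : t ≥ s for all s ∈ Î} and strictly decreasing on I₋ = {t ∈ I : t ≤ s for all s ∈ Î}; and (ii) φ has no stationary points in I \ Î. -/

import Mathlib

open Filter Set

/-- Lower Dini directional derivative of a function of one real variable. -/
noncomputable def dini (φ : ℝ → ℝ) (s u : ℝ) : ℝ :=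
  liminf (fun h : ℝ => (φ (s + h * u) - φ s) / h) (nhdsWithin 0 (Ioi 0))

/-- Pseudoconvexity w.r.t. the lower Dini derivative, one variable. -/
def PseudoconvexOn (φ : ℝ → ℝ) (I : Set ℝ) : Prop :=
  ∀ s ∈ I, ∀ t ∈ I, φ t < φ s → dini φ s (t - s) < 0

/-- A direction `u` is admissible at `s` relative to `I`. -/
def Admissible (I : Set ℝ) (s u : ℝ) : Prop :=
  ∃ δ > 0, ∀ h ∈ Ioo (0:ℝ) δ, s + h * u ∈ I

/-- `s` is a stationary point of `φ` relative to `I`. -/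
def Stationary (φ : ℝ → ℝ) (I : Set ℝ) (s : ℝ) : Prop :=
  ∀ u : ℝ, Admissible I s u → 0 ≤ dini φ s u

/-- The set of global minimizers of `φ` over `I`. -/
def ArgminSet (φ : ℝ → ℝ) (I : Set ℝ) : Set ℝ := {t ∈ I | ∀ s ∈ I, φ t ≤ φ s}

/-!
A pseudoconvex `φ` has, for every `t` with `φ t < φ s`, points of smaller value arbitrarily close
to `s` on the side of `t`. For a lower semicontinuous `φ`, if every point of `[p, q)` has such
points to its right, then the minimum of `φ` over each `[z, q]` is attained at `q`, so `φ` is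
strictly decreasing on `[p, q]`. Applied on intervals of non-minimizers, this yields the strict
monotonicity on both sides of the minimizers and the convexity of the set of minimizers.

Conversely, the monotonicity structure makes `φ` quasiconvex. At a non-stationary `s` with
`φ t < φ s` there is a descent direction `u`; quasiconvexity forces `u` to point towards `t`, and
`dini φ s (t - s)` is then a positive multiple of `dini φ s u < 0`.
-/

open Topology OrderDual

section
variable {α β : Type*} [ConditionallyCompleteLinearOrder α] [TopologicalSpace α] [OrderTopology α]
  [LinearOrder β] {φ : α → β} {p q : α}

theorem LowerSemicontinuousOn.isMinOn_right_of_frequently_lt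
    (hφ : LowerSemicontinuousOn φ (Icc p q)) (hpq : p ≤ q)
    (H : ∀ y ∈ Ico p q, ∃ᶠ z in 𝓝[>] y, φ z < φ y) : IsMinOn φ (Icc p q) q := by
  obtain ⟨m, hm, hmin⟩ := hφ.exists_isMinOn (nonempty_Icc.2 hpq) isCompact_Icc
  obtain rfl | hmq := hm.2.eq_or_lt
  · exact hmin
  have hmin_right : ∀ᶠ z in 𝓝[>] m, φ m ≤ φ z := by
    filter_upwards [Ioo_mem_nhdsGT hmq] with z hz
    exact hmin ⟨hm.1.trans hz.1.le, hz.2.le⟩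
  obtain ⟨z, hz, hmz⟩ := ((H m ⟨hm.1, hmq⟩).and_eventually hmin_right).exists
  exact absurd hmz hz.not_ge

theorem LowerSemicontinuousOn.strictAntiOn_Icc_of_frequently_lt
    (hφ : LowerSemicontinuousOn φ (Icc p q))
    (H : ∀ y ∈ Ico p q, ∃ᶠ z in 𝓝[>] y, φ z < φ y) : StrictAntiOn φ (Icc p q) := by
  intro y hy y' hy' hyy'
  obtain ⟨z, hzy, hz⟩ :=
    ((H y ⟨hy.1, hyy'.trans_le hy'.2⟩).and_eventually (Ioo_mem_nhdsGT hyy')).exists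
  have hsub : Icc z y' ⊆ Icc p q := Icc_subset_Icc (hy.1.trans hz.1.le) hy'.2
  have hmin := (hφ.mono hsub).isMinOn_right_of_frequently_lt hz.2.le
    fun w hw => H w ⟨hy.1.trans (hz.1.le.trans hw.1), hw.2.trans_le hy'.2⟩
  exact (hmin (left_mem_Icc.2 hz.2.le)).trans_lt hzy

theorem LowerSemicontinuousOn.strictMonoOn_Icc_of_frequently_lt
    (hφ : LowerSemicontinuousOn φ (Icc p q))
    (H : ∀ y ∈ Ioc p q, ∃ᶠ z in 𝓝[<] y, φ z < φ y) : StrictMonoOn φ (Icc p q) := by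
  have := LowerSemicontinuousOn.strictAntiOn_Icc_of_frequently_lt (α := αᵒᵈ) (φ := φ ∘ ofDual)
    (p := toDual q) (q := toDual p) (by rwa [Icc_toDual]) fun y hy => H (ofDual y) ⟨hy.2, hy.1⟩
  exact fun a ha b hb hab => this ⟨hb.2, hb.1⟩ ⟨ha.2, ha.1⟩ hab

end

theorem strictMonoOn_or_strictAntiOn_of_forall_Icc {α β : Type*} [LinearOrder α] [Preorder β]
    {f : α → β} {s : Set α}
    (h : ∀ p ∈ s, ∀ q ∈ s, StrictMonoOn f (Icc p q) ∨ StrictAntiOn f (Icc p q)) :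
    StrictMonoOn f s ∨ StrictAntiOn f s := by
  refine or_iff_not_imp_left.2 fun hmono p hp q hq hpq => ?_
  simp only [StrictMonoOn, not_forall] at hmono
  obtain ⟨a, ha, b, hb, hab, hba⟩ := hmono
  rcases h (min p a) (min_rec' (· ∈ s) hp ha) (max q b) (max_rec' (· ∈ s) hq hb) with h | h
  · exact absurd (h ⟨min_le_right _ _, hab.le.trans (le_max_right _ _)⟩
      ⟨(min_le_right _ _).trans hab.le, le_max_right _ _⟩ hab) hba
  · exact h ⟨min_le_left _ _, hpq.le.trans (le_max_left _ _)⟩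
      ⟨(min_le_left _ _).trans hpq.le, le_max_left _ _⟩ hpq

theorem LowerSemicontinuousOn.exists_forall_Icc_lt {α β : Type*} [LinearOrder α]
    [TopologicalSpace α] [OrderTopology α] [DenselyOrdered α] [NoMaxOrder α] [Preorder β]
    {f : α → β} {s : Set α} {x b : α} {c : β} (hf : LowerSemicontinuousOn f s)
    (hsub : Icc x b ⊆ s) (hxb : x < b) (hc : c < f x) :
    ∃ q ∈ Ioo x b, ∀ y ∈ Icc x q, c < f y := by
  have hnhds : ∀ᶠ y in 𝓝[≥] x, c < f y := by
    rw [← nhdsWithin_Icc_eq_nhdsGE hxb]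
    exact nhdsWithin_mono _ hsub (hf x (hsub (left_mem_Icc.2 hxb.le)) c hc)
  obtain ⟨q, hxq, hq⟩ := nhdsGE_basis_Icc.eventually_iff.1 (hnhds.and (Ico_mem_nhdsGE hxb))
  exact ⟨q, ⟨hxq, (hq ⟨hxq.le, le_rfl⟩).2.2⟩, fun y hy => (hq hy).1⟩

theorem Real.liminf_const_mul {ι : Type*} {f : Filter ι} {u : ι → ℝ} {c : ℝ} (hc : 0 < c) :
    liminf (fun x => c * u x) f = c * liminf u f := by
  simp only [liminf_eq]
  rw [← smul_eq_mul, ← Real.sSup_smul_of_nonneg hc.le]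
  congr 1
  ext a
  rw [mem_smul_set_iff_inv_smul_mem₀ hc.ne']
  simp only [mem_ofPred_eq, smul_eq_mul, inv_mul_le_iff₀ hc]

theorem tendsto_add_mul_nhdsGT {s u : ℝ} (hu : 0 < u) :
    Tendsto (fun h => s + h * u) (𝓝[>] 0) (𝓝[>] s) := by
  refine tendsto_nhdsWithin_of_tendsto_nhds_of_eventually_within _ ?_ ?_
  · exact ((by fun_prop : Continuous fun h : ℝ => s + h * u).tendsto' 0 s (by simp)).mono_left
      nhdsWithin_le_nhds
  · filter_upwards [self_mem_nhdsWithin] with h (hh : 0 < h)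
    exact lt_add_of_pos_right s (mul_pos hh hu)

theorem tendsto_add_mul_nhdsLT {s u : ℝ} (hu : u < 0) :
    Tendsto (fun h => s + h * u) (𝓝[>] 0) (𝓝[<] s) := by
  refine tendsto_nhdsWithin_of_tendsto_nhds_of_eventually_within _ ?_ ?_
  · exact ((by fun_prop : Continuous fun h : ℝ => s + h * u).tendsto' 0 s (by simp)).mono_left
      nhdsWithin_le_nhds
  · filter_upwards [self_mem_nhdsWithin] with h (hh : 0 < h)
    exact add_lt_of_neg_right s (mul_neg_of_pos_of_neg hh hu)

section Dini

variable {I : Set ℝ} {φ : ℝ → ℝ} {s t u : ℝ}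

theorem dini_mul {r : ℝ} (hr : 0 < r) : dini φ s (r * u) = r * dini φ s u := by
  have hmap : map (r * ·) (𝓝[>] (0 : ℝ)) = 𝓝[>] 0 := by
    conv_lhs => rw [← comap_mulLeft_nhdsGT_zero hr]
    exact map_comap_of_surjective (mul_left_surjective₀ hr.ne') _
  unfold dini
  rw [← Real.liminf_const_mul hr]
  nth_rw 2 [← hmap]
  rw [← liminf_comp]
  congr 1
  ext h
  rw [Function.comp_apply, mul_assoc, mul_left_comm h r u, ← mul_div_assoc,
    mul_div_mul_left _ _ hr.ne']

theorem frequently_lt_of_dini_neg (h : dini φ s u < 0) :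
    ∃ᶠ x in 𝓝[>] 0, φ (s + x * u) < φ s := by
  refine not_not.1 fun hev => h.not_ge ?_
  simp only [not_frequently, not_lt] at hev
  rw [dini, liminf_eq]
  refine Real.sSup_nonneg' ⟨0, ?_, le_rfl⟩
  filter_upwards [hev, self_mem_nhdsWithin] with h hh (hpos : 0 < h)
  exact div_nonneg (sub_nonneg.2 hh) hpos.le

theorem admissible_sub (hI : I.OrdConnected) (hs : s ∈ I) (ht : t ∈ I) :
    Admissible I s (t - s) :=
  ⟨1, one_pos, fun _ hh => hI.convex.add_smul_sub_mem hs ht ⟨hh.1.le, hh.2.le⟩⟩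

end Dini

section Argmin

variable {I : Set ℝ} {φ : ℝ → ℝ} {a y : ℝ}

theorem exists_lt_of_notMem_argminSet (hy : y ∈ I) (hyA : y ∉ ArgminSet φ I) :
    ∃ r ∈ I, φ r < φ y := by
  by_contra! h
  exact hyA ⟨hy, h⟩

theorem lt_of_mem_argminSet_of_notMem (ha : a ∈ ArgminSet φ I) (hy : y ∈ I)
    (hyA : y ∉ ArgminSet φ I) : φ a < φ y :=
  let ⟨r, hr, hry⟩ := exists_lt_of_notMem_argminSet hy hyA
  (ha.2 r hr).trans_lt hry

theorem quasiconvexOn_of_argminSet (hI : I.OrdConnected) (hA : (ArgminSet φ I).OrdConnected)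
    (hmono : MonotoneOn φ {t ∈ I | ∀ s ∈ ArgminSet φ I, s ≤ t})
    (hanti : AntitoneOn φ {t ∈ I | ∀ s ∈ ArgminSet φ I, t ≤ s}) :
    QuasiconvexOn ℝ I φ := by
  intro r
  rw [convex_iff_ordConnected]
  refine ⟨fun x hx z hz y hy => ?_⟩
  have hyI : y ∈ I := hI.out hx.1 hz.1 hy
  refine ⟨hyI, ?_⟩
  by_cases hyA : y ∈ ArgminSet φ I
  · exact (hyA.2 x hx.1).trans hx.2
  by_cases hupper : ∀ a ∈ ArgminSet φ I, a ≤ y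
  · exact (hmono ⟨hyI, hupper⟩ ⟨hz.1, fun a ha => (hupper a ha).trans hy.2⟩ hy.2).trans hz.2
  obtain ⟨a, ha, hya⟩ : ∃ a ∈ ArgminSet φ I, y < a := by simpa using hupper
  have hlower : ∀ a' ∈ ArgminSet φ I, y ≤ a' := fun a' ha' =>
    le_of_not_gt fun ha'y => hyA (hA.out ha' ha ⟨ha'y.le, hya.le⟩)
  exact (hanti ⟨hx.1, fun a' ha' => hy.1.trans (hlower a' ha')⟩ ⟨hyI, hlower⟩ hy.1).trans hx.2

end Argmin

theorem QuasiconvexOn.le_max_of_mem_uIcc {I : Set ℝ} {φ : ℝ → ℝ} (hq : QuasiconvexOn ℝ I φ)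
    {x y z : ℝ} (hx : x ∈ I) (hy : y ∈ I) (hz : z ∈ uIcc x y) : φ z ≤ max (φ x) (φ y) :=
  ((hq _).ordConnected.uIcc_subset ⟨hx, le_max_left _ _⟩ ⟨hy, le_max_right _ _⟩ hz).2

theorem QuasiconvexOn.pseudoconvexOn {I : Set ℝ} {φ : ℝ → ℝ} (hq : QuasiconvexOn ℝ I φ)
    (hstat : ∀ t ∈ I \ ArgminSet φ I, ¬Stationary φ I t) : PseudoconvexOn φ I := by
  intro s hs t ht hts
  have hsA : s ∉ ArgminSet φ I := fun hsA => (hsA.2 t ht).not_gt hts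
  obtain ⟨u, ⟨δ, hδ, hδI⟩, hu⟩ : ∃ u, Admissible I s u ∧ dini φ s u < 0 := by
    simpa [Stationary] using hstat s ⟨hs, hsA⟩
  obtain ⟨h, hw, hh⟩ := ((frequently_lt_of_dini_neg hu).and_eventually (Ioo_mem_nhdsGT hδ)).exists
  have hu0 : u ≠ 0 := by rintro rfl; simp at hw
  -- quasiconvexity forces the descent direction `u` to point towards `t`
  have hside : s ∉ uIcc t (s + h * u) := fun hmem =>
    (hq.le_max_of_mem_uIcc ht (hδI h hh) hmem).not_gt (max_lt hts hw)
  have hratio : 0 < (t - s) / u := by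
    simp only [mem_uIcc, not_or, not_and, not_le] at hside
    rcases hu0.lt_or_gt with hneg | hpos
    · exact div_pos_of_neg_of_neg (sub_neg.2 (hside.2 (by nlinarith [hh.1]))) hneg
    · exact div_pos (sub_pos.2 (lt_of_not_ge fun hle => by nlinarith [hside.1 hle, hh.1])) hpos
  simpa [div_mul_cancel₀ _ hu0] using (dini_mul (φ := φ) (s := s) (u := u) hratio).trans_lt
    (mul_neg_of_pos_of_neg hratio hu)

section Pseudoconvex

variable {I : Set ℝ} {φ : ℝ → ℝ} {p q s t : ℝ}

theorem PseudoconvexOn.frequently_nhdsGT_lt (hP : PseudoconvexOn φ I) (hs : s ∈ I) (ht : t ∈ I)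
    (hst : s < t) (hφ : φ t < φ s) : ∃ᶠ z in 𝓝[>] s, φ z < φ s :=
  (tendsto_add_mul_nhdsGT (sub_pos.2 hst)).frequently
    (frequently_lt_of_dini_neg (hP s hs t ht hφ))

theorem PseudoconvexOn.frequently_nhdsLT_lt (hP : PseudoconvexOn φ I) (hs : s ∈ I) (ht : t ∈ I)
    (hts : t < s) (hφ : φ t < φ s) : ∃ᶠ z in 𝓝[<] s, φ z < φ s :=
  (tendsto_add_mul_nhdsLT (sub_neg.2 hts)).frequently
    (frequently_lt_of_dini_neg (hP s hs t ht hφ))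

theorem PseudoconvexOn.strictAntiOn_Icc (hP : PseudoconvexOn φ I)
    (hlsc : LowerSemicontinuousOn φ I) (hsub : Icc p q ⊆ I)
    (H : ∀ y ∈ Ico p q, ∃ r ∈ I, y < r ∧ φ r < φ y) : StrictAntiOn φ (Icc p q) :=
  (hlsc.mono hsub).strictAntiOn_Icc_of_frequently_lt fun y hy =>
    let ⟨_, hr, hyr, hry⟩ := H y hy
    hP.frequently_nhdsGT_lt (hsub (Ico_subset_Icc_self hy)) hr hyr hry

theorem PseudoconvexOn.strictMonoOn_Icc (hP : PseudoconvexOn φ I)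
    (hlsc : LowerSemicontinuousOn φ I) (hsub : Icc p q ⊆ I)
    (H : ∀ y ∈ Ioc p q, ∃ r ∈ I, r < y ∧ φ r < φ y) : StrictMonoOn φ (Icc p q) :=
  (hlsc.mono hsub).strictMonoOn_Icc_of_frequently_lt fun y hy =>
    let ⟨_, hr, hry, hφ⟩ := H y hy
    hP.frequently_nhdsLT_lt (hsub (Ioc_subset_Icc_self hy)) hr hry hφ

theorem PseudoconvexOn.strictMonoOn_or_strictAntiOn_Icc (hP : PseudoconvexOn φ I)
    (hlsc : LowerSemicontinuousOn φ I) (hsub : Icc p q ⊆ I)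
    (H : ∀ y ∈ Icc p q, ∃ r ∈ I, φ r < φ y) :
    StrictMonoOn φ (Icc p q) ∨ StrictAntiOn φ (Icc p q) := by
  rcases lt_or_ge q p with hqp | hpq
  · exact Or.inl fun y hy => absurd (hy.1.trans hy.2) hqp.not_ge
  obtain ⟨m, hm, hmin⟩ := (hlsc.mono hsub).exists_isMinOn (nonempty_Icc.2 hpq) isCompact_Icc
  obtain ⟨r, hr, hrm⟩ := H m hm
  have hr_out : r ∉ Icc p q := fun hrpq => (hmin hrpq).not_gt hrm
  rcases lt_or_ge r p with hrp | hpr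
  · exact Or.inl <| hP.strictMonoOn_Icc hlsc hsub fun y hy =>
      ⟨r, hr, hrp.trans hy.1, hrm.trans_le (hmin (Ioc_subset_Icc_self hy))⟩
  · have hqr : q < r := lt_of_not_ge fun hrq => hr_out ⟨hpr, hrq⟩
    exact Or.inr <| hP.strictAntiOn_Icc hlsc hsub fun y hy =>
      ⟨r, hr, hy.2.trans hqr, hrm.trans_le (hmin (Ico_subset_Icc_self hy))⟩

theorem PseudoconvexOn.ordConnected_argminSet (hP : PseudoconvexOn φ I) (hI : I.OrdConnected)
    (hlsc : LowerSemicontinuousOn φ I) : (ArgminSet φ I).OrdConnected := by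
  refine ⟨fun a ha b hb x hx => ?_⟩
  -- a short interval `[x, q]` of non-minimizers sees smaller values on both sides
  by_contra hxA
  have hxI : x ∈ I := hI.out ha.1 hb.1 hx
  have hxb : x < b := hx.2.lt_of_ne (by rintro rfl; exact hxA hb)
  obtain ⟨q, hq, hφq⟩ := hlsc.exists_forall_Icc_lt (hI.out hxI hb.1) hxb
    (lt_of_mem_argminSet_of_notMem ha hxI hxA)
  have hsub : Icc x q ⊆ I := hI.out hxI (hI.out hxI hb.1 ⟨hq.1.le, hq.2.le⟩)
  have hnotA : ∀ y ∈ Icc x q, y ∉ ArgminSet φ I := fun y hy hyA =>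
    (hyA.2 a ha.1).not_gt (hφq y hy)
  have hmono := hP.strictMonoOn_Icc hlsc hsub fun y hy =>
    ⟨a, ha.1, hx.1.trans_lt hy.1, hφq y (Ioc_subset_Icc_self hy)⟩
  have hanti := hP.strictAntiOn_Icc hlsc hsub fun y hy =>
    have hy' := Ico_subset_Icc_self hy
    ⟨b, hb.1, hy.2.trans hq.2, lt_of_mem_argminSet_of_notMem hb (hsub hy') (hnotA y hy')⟩
  have hxq := left_mem_Icc.2 hq.1.le
  have hqq := right_mem_Icc.2 hq.1.le
  exact (hmono hxq hqq hq.1).asymm (hanti hxq hqq hq.1)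

theorem PseudoconvexOn.strictMonoOn_above_argminSet (hP : PseudoconvexOn φ I)
    (hI : I.OrdConnected) (hlsc : LowerSemicontinuousOn φ I) {a : ℝ} (ha : a ∈ ArgminSet φ I) :
    StrictMonoOn φ {t ∈ I | ∀ s ∈ ArgminSet φ I, s ≤ t} := by
  intro p hp q hq hpq
  have hsub := hI.out hp.1 hq.1
  refine hP.strictMonoOn_Icc hlsc hsub (fun y hy => ?_) (left_mem_Icc.2 hpq.le)
    (right_mem_Icc.2 hpq.le) hpq
  have hyA : y ∉ ArgminSet φ I := fun hyA => (hp.2 y hyA).not_gt hy.1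
  exact ⟨a, ha.1, (hp.2 a ha).trans_lt hy.1,
    lt_of_mem_argminSet_of_notMem ha (hsub (Ioc_subset_Icc_self hy)) hyA⟩

theorem PseudoconvexOn.strictAntiOn_below_argminSet (hP : PseudoconvexOn φ I)
    (hI : I.OrdConnected) (hlsc : LowerSemicontinuousOn φ I) {a : ℝ} (ha : a ∈ ArgminSet φ I) :
    StrictAntiOn φ {t ∈ I | ∀ s ∈ ArgminSet φ I, t ≤ s} := by
  intro p hp q hq hpq
  have hsub := hI.out hp.1 hq.1
  refine hP.strictAntiOn_Icc hlsc hsub (fun y hy => ?_) (left_mem_Icc.2 hpq.le)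
    (right_mem_Icc.2 hpq.le) hpq
  have hyA : y ∉ ArgminSet φ I := fun hyA => (hq.2 y hyA).not_gt hy.2
  exact ⟨a, ha.1, hy.2.trans_le (hq.2 a ha),
    lt_of_mem_argminSet_of_notMem ha (hsub (Ico_subset_Icc_self hy)) hyA⟩

theorem PseudoconvexOn.not_stationary (hP : PseudoconvexOn φ I) (hI : I.OrdConnected)
    (ht : t ∈ I) (htA : t ∉ ArgminSet φ I) : ¬Stationary φ I t := fun hst =>
  let ⟨r, hr, hrt⟩ := exists_lt_of_notMem_argminSet ht htA
  (hst (r - t) (admissible_sub hI ht hr)).not_gt (hP t ht r hr hrt)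

end Pseudoconvex

theorem stmt6 (I : Set ℝ) (hI : I.OrdConnected) (φ : ℝ → ℝ)
    (hlsc : LowerSemicontinuousOn φ I) :
    PseudoconvexOn φ I ↔
      ((ArgminSet φ I = ∅ ∧ (StrictMonoOn φ I ∨ StrictAntiOn φ I)) ∨
        ((ArgminSet φ I).Nonempty ∧ Convex ℝ (ArgminSet φ I) ∧
          (∀ a ∈ ArgminSet φ I, ∀ b ∈ ArgminSet φ I, φ a = φ b) ∧
          StrictMonoOn φ {t ∈ I | ∀ s ∈ ArgminSet φ I, s ≤ t} ∧
          StrictAntiOn φ {t ∈ I | ∀ s ∈ ArgminSet φ I, t ≤ s})) ∧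
      (∀ t ∈ I \ ArgminSet φ I, ¬ Stationary φ I t) := by
  constructor
  · intro hP
    refine ⟨?_, fun t ht => hP.not_stationary hI ht.1 ht.2⟩
    obtain hA | ⟨a, ha⟩ := (ArgminSet φ I).eq_empty_or_nonempty
    · refine Or.inl ⟨hA, strictMonoOn_or_strictAntiOn_of_forall_Icc fun p hp q hq =>
        hP.strictMonoOn_or_strictAntiOn_Icc hlsc (hI.out hp hq) fun y hy => ?_⟩
      exact exists_lt_of_notMem_argminSet (hI.out hp hq hy) (hA ▸ notMem_empty y)
    · exact Or.inr ⟨⟨a, ha⟩, (hP.ordConnected_argminSet hI hlsc).convex,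
        fun b hb c hc => le_antisymm (hb.2 c hc.1) (hc.2 b hb.1),
        hP.strictMonoOn_above_argminSet hI hlsc ha, hP.strictAntiOn_below_argminSet hI hlsc ha⟩
  · rintro ⟨hstruct, hstat⟩
    refine QuasiconvexOn.pseudoconvexOn ?_ hstat
    rcases hstruct with ⟨-, hmono | hanti⟩ | ⟨-, hconv, -, hmono, hanti⟩
    · exact hmono.monotoneOn.quasiconvexOn hI.convex
    · exact hanti.antitoneOn.quasiconvexOn hI.convex
    · exact quasiconvexOn_of_argminSet hI hconv.ordConnected hmono.monotoneOn hanti.antitoneOn
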